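/- The QAOA algorithm of depth p on a CSP instance whose interaction hypergraph is G is a generic 2p-local algorithm: for every vertex subset L, the joint distribution of the measured outputs at vertices in L depends only on the union of the p-neighborhoods of vertices in L, and the output bit at v is independent of the joint distribution of output bits at all vertices at distance greater than 2p from v. -/

import Mathlib

open MeasureTheory ProbabilityTheory Real Filter Finset
open scoped NNReal ENNReal ComplexOrder

/-- A `k`-uniform hypergraph on vertex set `Fin n`. -/
abbrev KHypergraph (n k : ℕ) := Multiset (Fin k → Fin n)

/-- Two vertices are adjacent if they lie in a common hyperedge. -/
def HAdj {n k : ℕ} (G : KHypergraph n k) (u v : Fin n) : Prop :=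
  ∃ e ∈ G, (∃ i, e i = u) ∧ (∃ i, e i = v)

open Classical in
/-- The `p`-neighborhood of a vertex set `L`. -/
noncomputable def ball {n k : ℕ} (G : KHypergraph n k) (L : Finset (Fin n)) :
    ℕ → Finset (Fin n)
  | 0 => L
  | p + 1 =>
      ball G L p ∪ Finset.univ.filter (fun v => ∃ u ∈ ball G L p, HAdj G u v)

/-- Computational basis configurations of `n` qubits. -/
abbrev Cfg (n : ℕ) := Fin n → Bool

/-- Operators on the Hilbert space of `n` qubits (in the computational basis). -/
abbrev QOp (n : ℕ) := Matrix (Cfg n) (Cfg n) ℂ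

/-- The diagonal cost Hamiltonian `C = Σ_{e ∈ G} f(x|_e)` of a CSP instance
whose interaction hypergraph is `G`, with local terms `f`. -/
noncomputable def costEnergy {n k : ℕ} (G : KHypergraph n k)
    (f : (Fin k → Bool) → ℝ) (x : Cfg n) : ℝ :=
  (G.map (fun e => f (fun i => x (e i)))).sum

/-- The phase-separation layer `e^{-iγC}` (a diagonal unitary). -/
noncomputable def phaseLayer {n k : ℕ} (G : KHypergraph n k)
    (f : (Fin k → Bool) → ℝ) (γ : ℝ) : QOp n :=
  Matrix.diagonal fun x => Complex.exp (-(Complex.I * γ * costEnergy G f x))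

/-- The mixing layer `e^{-iβB}` where `B = Σ_v X_v`; in closed form its entries
are products of `cos β` (unflipped bits) and `-i sin β` (flipped bits). -/
noncomputable def mixerLayer (n : ℕ) (β : ℝ) : QOp n := fun x y =>
  ∏ v : Fin n, if x v = y v then (Real.cos β : ℂ) else -Complex.I * Real.sin β

/-- The depth-`p` QAOA unitary `U = Π_{j=1}^p e^{-iβ_j B} e^{-iγ_j C}`. -/
noncomputable def qaoaU {n k : ℕ} (G : KHypergraph n k)
    (f : (Fin k → Bool) → ℝ) (p : ℕ) (β γ : Fin p → ℝ) : QOp n :=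
  ((List.finRange p).map fun j => mixerLayer n (β j) * phaseLayer G f (γ j)).prod

/-- The uniform superposition `|+⟩^{⊗n}`. -/
noncomputable def plusState (n : ℕ) : Cfg n → ℂ :=
  fun _ => ((Real.sqrt (2 ^ n))⁻¹ : ℝ)

/-- The probability that measuring the QAOA state in the computational basis
yields the configuration `x`. -/
noncomputable def qaoaProb {n k : ℕ} (G : KHypergraph n k)
    (f : (Fin k → Bool) → ℝ) (p : ℕ) (β γ : Fin p → ℝ) (x : Cfg n) : ℝ :=
  ‖(qaoaU G f p β γ).mulVec (plusState n) x‖ ^ 2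

open Classical in
/-- The probability that the QAOA measurement outcome lies in the event `E`. -/
noncomputable def qaoaProbOf {n k : ℕ} (G : KHypergraph n k)
    (f : (Fin k → Bool) → ℝ) (p : ℕ) (β γ : Fin p → ℝ) (E : Set (Cfg n)) : ℝ :=
  ∑ x ∈ Finset.univ.filter (· ∈ E), qaoaProb G f p β γ x

/-!
Heisenberg picture. Call an operator supported on `S` if it acts as the identity on the qubits
outside `S`. Conjugation by the mixing layer, a product of single-qubit rotations, preserves
support on `S`; conjugation by the phase layer enlarges it to the `1`-ball of `S` and only involves
the clauses meeting `S`. Hence the QAOA-evolved projector onto an event about `L` is supported on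
the `p`-ball of `L` and depends only on the clauses inside it. For the second claim, the evolved
projectors for `v` and for the vertices beyond distance `2p` have disjoint supports, and in the
uniform superposition the expectation of a product of operators with disjoint supports factorises.
-/

open Matrix

section Coordinates

variable {ι α R : Type*} [Fintype ι] [DecidableEq ι] [Fintype α] [CommSemiring R]

/-- Functions of disjoint blocks of coordinates are uncorrelated under the uniform measure. -/
lemma sum_mul_sum_eq_card_mul_sum_mul {S T : Finset ι} (hST : Disjoint S T)
    {a b : (ι → α) → R} (ha : ∀ x y, (∀ i ∈ S, x i = y i) → a x = a y)
    (hb : ∀ x y, (∀ i ∈ T, x i = y i) → b x = b y) :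
    (∑ x, a x) * ∑ x, b x = Fintype.card (ι → α) * ∑ x, a x * b x := by
  let σ : (ι → α) × (ι → α) → (ι → α) × (ι → α) := fun q =>
    (S.piecewise q.1 q.2, S.piecewise q.2 q.1)
  have hσ : Function.Involutive σ := fun q => by
    ext i <;> by_cases hi : i ∈ S <;> simp [σ, hi]
  calc (∑ x, a x) * ∑ x, b x = ∑ q : (ι → α) × (ι → α), a q.1 * b q.2 := by
        rw [Finset.sum_mul_sum, ← Fintype.sum_prod_type']
    _ = ∑ q : (ι → α) × (ι → α), a q.1 * b q.1 := by
        refine Fintype.sum_bijective σ hσ.bijective _ _ fun q => ?_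
        congr 1
        · exact ha _ _ fun i hi => (S.piecewise_eq_of_mem _ _ hi).symm
        · exact hb _ _ fun i hi =>
            (S.piecewise_eq_of_notMem _ _ (disjoint_right.mp hST hi)).symm
    _ = Fintype.card (ι → α) * ∑ x, a x * b x := by
        simp only [Fintype.sum_prod_type_right, sum_const, card_univ, nsmul_eq_mul]

end Coordinates

namespace Matrix

variable {m l α : Type*} [Fintype m]

lemma conjTranspose_mul_mul_apply [NonUnitalSemiring α] [Star α] (U : Matrix m l α)
    (A : Matrix m m α) (i j : l) :
    (Uᴴ * A * U) i j = ∑ z, ∑ w, star (U z i) * A z w * U w j := by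
  simp only [mul_apply, conjTranspose_apply, sum_mul]
  exact sum_comm

lemma conjTranspose_mul_mul_distrib [DecidableEq m] [CommRing α] [StarRing α]
    {U : Matrix m m α} (hU : U ∈ unitaryGroup m α) (X Y : Matrix m m α) :
    Uᴴ * (X * Y) * U = Uᴴ * X * U * (Uᴴ * Y * U) := by
  have hUU : U * Uᴴ = 1 := mem_unitaryGroup_iff.mp hU
  calc Uᴴ * (X * Y) * U = Uᴴ * X * (U * Uᴴ) * Y * U := by rw [hUU, mul_one, mul_assoc Uᴴ X Y]
    _ = Uᴴ * X * U * (Uᴴ * Y * U) := by simp only [mul_assoc]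

end Matrix

lemma HAdj.symm {n k : ℕ} {G : KHypergraph n k} {u v : Fin n} (h : HAdj G u v) : HAdj G v u :=
  let ⟨e, he, hu, hv⟩ := h; ⟨e, he, hv, hu⟩

namespace Qaoa

variable {n k : ℕ}

section Ball

variable (G : KHypergraph n k)

open Classical in
lemma ball_succ (L : Finset (Fin n)) (r : ℕ) :
    ball G L (r + 1) = ball G L r ∪ univ.filter (fun v => ∃ u ∈ ball G L r, HAdj G u v) := by
  rw [ball]

variable {G}

lemma mem_ball_succ_of_hAdj {L : Finset (Fin n)} {r : ℕ} {u v : Fin n} (hu : u ∈ ball G L r)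
    (h : HAdj G u v) : v ∈ ball G L (r + 1) := by
  classical
  rw [ball_succ]
  exact mem_union_right _ (mem_filter.mpr ⟨mem_univ v, u, hu, h⟩)

variable (G)

lemma ball_monotone (L : Finset (Fin n)) : Monotone (ball G L) :=
  monotone_nat_of_le_succ fun r => by
    classical
    rw [ball_succ]
    exact subset_union_left

lemma subset_ball (L : Finset (Fin n)) (r : ℕ) : L ⊆ ball G L r :=
  ball_monotone G L r.zero_le

lemma ball_mono {L L' : Finset (Fin n)} (h : L ⊆ L') (r : ℕ) : ball G L r ⊆ ball G L' r := by
  classical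
  induction r with
  | zero => exact h
  | succ r ih =>
    intro w hw
    rw [ball_succ, mem_union, mem_filter] at hw
    rcases hw with hw | ⟨-, u, hu, huw⟩
    · exact ball_monotone G L' r.le_succ (ih hw)
    · exact mem_ball_succ_of_hAdj (ih hu) huw

lemma ball_ball (L : Finset (Fin n)) (a c : ℕ) : ball G (ball G L a) c = ball G L (a + c) := by
  induction c with
  | zero => rfl
  | succ c ih => rw [ball_succ, ih, ← add_assoc, ball_succ]

variable {G}

lemma exists_mem_ball_singleton_of_mem_ball {L : Finset (Fin n)} {r : ℕ} {w : Fin n}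
    (hw : w ∈ ball G L r) : ∃ u ∈ L, u ∈ ball G {w} r := by
  classical
  induction r generalizing w with
  | zero => exact ⟨w, hw, mem_singleton_self w⟩
  | succ r ih =>
    rw [ball_succ, mem_union, mem_filter] at hw
    rcases hw with hw | ⟨-, w', hw', hadj⟩
    · obtain ⟨u, hu, huw⟩ := ih hw
      exact ⟨u, hu, ball_monotone G _ r.le_succ huw⟩
    · obtain ⟨u, hu, huw'⟩ := ih hw'
      have hw'w : {w'} ⊆ ball G {w} 1 :=
        singleton_subset_iff.mpr (mem_ball_succ_of_hAdj (mem_singleton_self w) (HAdj.symm hadj))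
      refine ⟨u, hu, ?_⟩
      rw [add_comm, ← ball_ball]
      exact ball_mono G hw'w r huw'

lemma disjoint_ball_ball_compl_ball (L : Finset (Fin n)) (p q : ℕ) :
    Disjoint (ball G L p) (ball G (ball G L (p + q))ᶜ q) := by
  refine disjoint_left.mpr fun w hwL hwM => ?_
  obtain ⟨u, hu, huw⟩ := exists_mem_ball_singleton_of_mem_ball hwM
  refine mem_compl.mp hu ?_
  rw [← ball_ball]
  exact ball_mono G (singleton_subset_iff.mpr hwL) q huw

end Ball

def Meets (S : Finset (Fin n)) (e : Fin k → Fin n) : Prop := ∃ i, e i ∈ S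

instance (S : Finset (Fin n)) : DecidablePred (Meets (k := k) S) :=
  fun e => inferInstanceAs (Decidable (∃ i, e i ∈ S))

section Edges

variable {G G' : KHypergraph n k} {S : Finset (Fin n)}

lemma mem_ball_one_of_meets {e : Fin k → Fin n} (he : e ∈ G) (hS : Meets S e) (i : Fin k) :
    e i ∈ ball G S 1 :=
  let ⟨j, hj⟩ := hS; mem_ball_succ_of_hAdj hj ⟨e, he, ⟨j, rfl⟩, i, rfl⟩

lemma hAdj_filter_meets_iff {u v : Fin n} (hu : u ∈ S) :
    HAdj (G.filter (Meets S)) u v ↔ HAdj G u v := by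
  refine ⟨fun ⟨e, he, hue, hve⟩ => ⟨e, (Multiset.mem_filter.mp he).1, hue, hve⟩,
    fun ⟨e, he, hue, hve⟩ => ⟨e, Multiset.mem_filter.mpr ⟨he, ?_⟩, hue, hve⟩⟩
  obtain ⟨i, rfl⟩ := hue
  exact ⟨i, hu⟩

lemma ball_filter_meets_one : ball (G.filter (Meets S)) S 1 = ball G S 1 := by
  classical
  simp only [ball]
  congr 1
  exact filter_congr fun v _ => exists_congr fun u => and_congr_right hAdj_filter_meets_iff

lemma filter_meets_eq_of_filter_ball_eq {r : ℕ}
    (h : G.filter (fun e => ∀ i, e i ∈ ball G S (r + 1))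
      = G'.filter (fun e => ∀ i, e i ∈ ball G' S (r + 1))) :
    G.filter (Meets S) = G'.filter (Meets S) := by
  have inside : ∀ {H : KHypergraph n k}, H.filter (Meets S)
      = (H.filter (fun e => ∀ i, e i ∈ ball H S (r + 1))).filter (Meets S) := by
    intro H
    rw [Multiset.filter_filter]
    refine Multiset.filter_congr fun e he => ⟨fun hS => ⟨hS, fun i => ?_⟩, And.left⟩
    exact ball_monotone H S (by omega) (mem_ball_one_of_meets he hS i)
  rw [inside, h, ← inside]

end Edges

section Cost

variable {G : KHypergraph n k} {f : (Fin k → Bool) → ℝ}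

lemma costEnergy_congr {x y : Cfg n} (h : ∀ e ∈ G, ∀ i, x (e i) = y (e i)) :
    costEnergy G f x = costEnergy G f y := by
  unfold costEnergy
  congr 1
  exact Multiset.map_congr rfl fun e he => congrArg f (funext (h e he))

lemma costEnergy_filter_add_filter_not (q : (Fin k → Fin n) → Prop) [DecidablePred q]
    (x : Cfg n) :
    costEnergy (G.filter q) f x + costEnergy (G.filter (¬q ·)) f x = costEnergy G f x := by
  simp only [costEnergy, ← Multiset.sum_add, ← Multiset.map_add, Multiset.filter_add_not]

lemma costEnergy_sub_eq_filter_meets {S : Finset (Fin n)} {x y : Cfg n}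
    (hxy : ∀ v ∉ S, x v = y v) :
    costEnergy G f x - costEnergy G f y
      = costEnergy (G.filter (Meets S)) f x - costEnergy (G.filter (Meets S)) f y := by
  have : costEnergy (G.filter (¬Meets S ·)) f x = costEnergy (G.filter (¬Meets S ·)) f y :=
    costEnergy_congr fun e he i => hxy _ fun hi => (Multiset.mem_filter.mp he).2 ⟨i, hi⟩
  rw [← costEnergy_filter_add_filter_not (Meets S) x,
    ← costEnergy_filter_add_filter_not (Meets S) y, this]
  ring

end Cost

lemma cfg_add_self (x : Cfg n) : x + x = 0 := neg_add_cancel x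

lemma cfg_add_apply_of_eq_false {x d : Cfg n} {v : Fin n} (hd : d v = false) :
    (x + d) v = x v := by
  change xor (x v) (d v) = x v
  rw [hd, Bool.xor_false]

/-- `A = A_S ⊗ 1`: diagonal in the qubits outside `S` and invariant under flipping them. -/
structure SupportedOn (S : Finset (Fin n)) (A : QOp n) : Prop where
  eq_of_ne_zero : ∀ {x y : Cfg n}, A x y ≠ 0 → ∀ v ∉ S, x v = y v
  add_add : ∀ {d : Cfg n}, (∀ v ∈ S, d v = false) → ∀ x y, A (x + d) (y + d) = A x y

namespace SupportedOn

variable {S T : Finset (Fin n)} {A B : QOp n}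

lemma sum_apply_congr (hA : SupportedOn S A) {x x' : Cfg n} (h : ∀ v ∈ S, x v = x' v) :
    ∑ y, A x y = ∑ y, A x' y := by
  have hd : ∀ v ∈ S, (x + x') v = false := fun v hv => by
    change xor (x v) (x' v) = false
    rw [h v hv, Bool.xor_self]
  have hx' : x' = x + (x + x') := by rw [← add_assoc, cfg_add_self, zero_add]
  rw [hx']
  exact Fintype.sum_equiv (Equiv.addRight (x + x')) _ _ fun y => (hA.add_add hd x y).symm

lemma sum_sum_mul_apply (hA : SupportedOn S A) (hB : SupportedOn T B) (hST : Disjoint S T) :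
    ∑ x, ∑ y, (A * B) x y = ∑ x, (∑ y, A x y) * ∑ y, B x y := by
  refine sum_congr rfl fun x _ => ?_
  simp only [mul_apply]
  rw [sum_comm, sum_mul]
  refine sum_congr rfl fun z _ => ?_
  rw [← mul_sum]
  by_cases hxz : A x z = 0
  · simp [hxz]
  · rw [hB.sum_apply_congr fun v hv =>
      (hA.eq_of_ne_zero hxz v (disjoint_right.mp hST hv)).symm]

end SupportedOn

noncomputable def expVal (A : QOp n) : ℂ := star (plusState n) ⬝ᵥ (A *ᵥ plusState n)

lemma expVal_eq_sum (A : QOp n) : expVal A = (∑ x, ∑ y, A x y) / 2 ^ n := by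
  have hc : star (((√(2 ^ n))⁻¹ : ℝ) : ℂ) * (((√(2 ^ n))⁻¹ : ℝ) : ℂ) = ((2 : ℂ) ^ n)⁻¹ := by
    rw [Complex.star_def, Complex.conj_ofReal, ← Complex.ofReal_mul, ← mul_inv,
      Real.mul_self_sqrt (by positivity)]
    push_cast; rfl
  simp only [expVal, plusState, dotProduct, mulVec, Pi.star_apply, ← sum_mul, ← mul_sum]
  rw [div_eq_mul_inv, ← hc]
  ring

lemma expVal_mul_of_disjoint {S T : Finset (Fin n)} {A B : QOp n} (hA : SupportedOn S A)
    (hB : SupportedOn T B) (hST : Disjoint S T) :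
    expVal (A * B) = expVal A * expVal B := by
  have key := sum_mul_sum_eq_card_mul_sum_mul hST (fun x y h => hA.sum_apply_congr h)
    (fun x y h => hB.sum_apply_congr h)
  simp only [Fintype.card_fun, Fintype.card_bool, Fintype.card_fin, Nat.cast_pow,
    Nat.cast_ofNat] at key
  rw [expVal_eq_sum, expVal_eq_sum, expVal_eq_sum, hA.sum_sum_mul_apply hB hST,
    div_mul_div_comm, key, ← pow_add]
  field_simp
  ring

open Classical in
noncomputable def projE (E : Set (Cfg n)) : QOp n :=
  diagonal fun x => if x ∈ E then 1 else 0

lemma projE_mul_projE (E₁ E₂ : Set (Cfg n)) : projE E₁ * projE E₂ = projE (E₁ ∩ E₂) := by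
  classical
  rw [projE, projE, projE, diagonal_mul_diagonal]
  congr 1
  funext x
  by_cases h₁ : x ∈ E₁ <;> by_cases h₂ : x ∈ E₂ <;> simp [h₁, h₂]

lemma supportedOn_projE {S : Finset (Fin n)} {E : Set (Cfg n)}
    (hE : ∀ x y, (∀ v ∈ S, x v = y v) → x ∈ E → y ∈ E) : SupportedOn S (projE E) where
  eq_of_ne_zero {x y} hxy v _ := by
    by_contra h
    exact hxy (diagonal_apply_ne _ fun hxy' => h (congrFun hxy' v))
  add_add {d} hd x y := by
    have hx : ∀ v ∈ S, (x + d) v = x v := fun v hv => cfg_add_apply_of_eq_false (hd v hv)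
    have hmem : x + d ∈ E ↔ x ∈ E :=
      ⟨hE _ _ hx, hE _ _ fun v hv => (hx v hv).symm⟩
    classical
    simp only [projE, diagonal_apply, add_left_inj, hmem]

lemma qaoaProbOf_eq_expVal (G : KHypergraph n k) (f : (Fin k → Bool) → ℝ) (p : ℕ)
    (β γ : Fin p → ℝ) (E : Set (Cfg n)) :
    (qaoaProbOf G f p β γ E : ℂ)
      = expVal ((qaoaU G f p β γ)ᴴ * projE E * qaoaU G f p β γ) := by
  classical
  set U := qaoaU G f p β γ
  have hφ : expVal (Uᴴ * projE E * U)
      = star (U *ᵥ plusState n) ⬝ᵥ (projE E *ᵥ (U *ᵥ plusState n)) := by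
    rw [expVal, ← mulVec_mulVec, ← mulVec_mulVec, dotProduct_mulVec, star_mulVec]
  rw [hφ, qaoaProbOf, sum_filter]
  push_cast
  simp only [dotProduct, projE, mulVec_diagonal, Pi.star_apply, qaoaProb, U]
  refine sum_congr rfl fun x _ => ?_
  split_ifs <;> simp [Complex.conj_mul']

section Mixer

noncomputable def mixerEntry (β : ℝ) (a b : Bool) : ℂ :=
  if a = b then (Real.cos β : ℂ) else -Complex.I * Real.sin β

lemma mixerLayer_apply (β : ℝ) (x y : Cfg n) :
    mixerLayer n β x y = ∏ v, mixerEntry β (x v) (y v) := rfl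

lemma sum_star_mixerEntry_mul (β : ℝ) (a c : Bool) :
    ∑ b, star (mixerEntry β b a) * mixerEntry β b c = if a = c then 1 else 0 := by
  have h : (Real.sin β : ℂ) ^ 2 + (Real.cos β : ℂ) ^ 2 = 1 := by
    exact_mod_cast Real.sin_sq_add_cos_sq β
  cases a <;> cases c <;> simp [mixerEntry, -Complex.ofReal_cos, -Complex.ofReal_sin] <;>
    first | ring1 | linear_combination h - (Real.sin β : ℂ) ^ 2 * Complex.I_sq

lemma star_mixerEntry_not_mul (β : ℝ) {b c : Bool} (hbc : b ≠ c) (a : Bool) :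
    star (mixerEntry β (!a) b) * mixerEntry β (!a) c
      = -(star (mixerEntry β a b) * mixerEntry β a c) := by
  cases a <;> cases b <;> cases c <;>
    simp_all [mixerEntry, -Complex.ofReal_cos, -Complex.ofReal_sin] <;> ring

lemma mixerLayer_mem_unitaryGroup (β : ℝ) : mixerLayer n β ∈ unitaryGroup (Cfg n) ℂ := by
  classical
  rw [mem_unitaryGroup_iff']
  ext x y
  simp only [mul_apply, star_apply, mixerLayer_apply, star_prod, ← prod_mul_distrib]
  rw [← Fintype.prod_sum (fun v b => star (mixerEntry β b (x v)) * mixerEntry β b (y v))]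
  simp only [sum_star_mixerEntry_mul, prod_boole, mem_univ, true_implies, one_apply]
  exact if_congr funext_iff.symm rfl rfl

lemma mixerLayer_add_add (β : ℝ) (x y d : Cfg n) :
    mixerLayer n β (x + d) (y + d) = mixerLayer n β x y := by
  simp only [mixerLayer_apply, mixerEntry, Pi.add_apply, add_left_inj]

lemma mixerLayer_add_single (β : ℝ) (v₀ : Fin n) (z x : Cfg n) :
    mixerLayer n β (z + Pi.single v₀ true) x
      = mixerEntry β (!z v₀) (x v₀) * ∏ v ∈ {v₀}ᶜ, mixerEntry β (z v) (x v) := by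
  classical
  rw [mixerLayer_apply, Fintype.prod_eq_mul_prod_compl v₀]
  congr 1
  · rw [Pi.add_apply, Pi.single_eq_same]
    cases z v₀ <;> rfl
  · refine prod_congr rfl fun v hv => ?_
    rw [Pi.add_apply, Pi.single_eq_of_ne (by simpa using hv), add_zero]

/-- The factor at a qubit `v₀ ∉ S` where `x` and `y` differ changes sign under flipping `v₀` in
both summation variables, so the sum cancels in pairs. -/
lemma SupportedOn.conj_mixerLayer_apply_eq_zero {S : Finset (Fin n)} {A : QOp n}
    (hA : SupportedOn S A) (β : ℝ) {x y : Cfg n} {v₀ : Fin n} (hv₀ : v₀ ∉ S)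
    (hxy : x v₀ ≠ y v₀) : ((mixerLayer n β)ᴴ * A * mixerLayer n β) x y = 0 := by
  classical
  set e : Cfg n := Pi.single v₀ true
  have he : ∀ v ∈ S, e v = false := fun v hv =>
    Pi.single_eq_of_ne (ne_of_mem_of_not_mem hv hv₀) _
  have hee (z : Cfg n) : z + e + e = z := by rw [add_assoc, cfg_add_self, add_zero]
  rw [conjTranspose_mul_mul_apply, ← Fintype.sum_prod_type']
  refine sum_ninvolution (fun q => (q.1 + e, q.2 + e)) (fun ⟨z, w⟩ => ?_) (fun ⟨z, w⟩ _ h => ?_)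
    (fun _ => mem_univ _) (fun ⟨z, w⟩ => by simp only [hee])
  · simp only [hA.add_add he]
    by_cases hzw : z v₀ = w v₀
    · rw [mixerLayer_add_single, mixerLayer_add_single, mixerLayer_apply, mixerLayer_apply,
        Fintype.prod_eq_mul_prod_compl v₀, Fintype.prod_eq_mul_prod_compl v₀, hzw]
      simp only [star_mul']
      linear_combination (star (∏ v ∈ {v₀}ᶜ, mixerEntry β (z v) (x v)) * A z w *
        ∏ v ∈ {v₀}ᶜ, mixerEntry β (w v) (y v)) * star_mixerEntry_not_mul β hxy (w v₀)
    · have hA0 : A z w = 0 := by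
        by_contra h
        exact hzw (hA.eq_of_ne_zero h v₀ hv₀)
      simp [hA0]
  · have : e = 0 := add_eq_left.mp (Prod.ext_iff.mp h).1
    simpa [e] using congrFun this v₀

lemma SupportedOn.conj_mixerLayer {S : Finset (Fin n)} {A : QOp n} (hA : SupportedOn S A)
    (β : ℝ) : SupportedOn S ((mixerLayer n β)ᴴ * A * mixerLayer n β) where
  eq_of_ne_zero {x y} hxy v hv := by
    by_contra h
    exact hxy (hA.conj_mixerLayer_apply_eq_zero β hv h)
  add_add {d} hd x y := by
    simp only [conjTranspose_mul_mul_apply]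
    refine (Fintype.sum_equiv (Equiv.addRight d) _ _ fun z => ?_).symm
    refine Fintype.sum_equiv (Equiv.addRight d) _ _ fun w => ?_
    simp only [Equiv.coe_addRight, mixerLayer_add_add, hA.add_add hd]

end Mixer

section Phase

lemma conj_phaseLayer_apply (G : KHypergraph n k) (f : (Fin k → Bool) → ℝ) (g : ℝ) (A : QOp n)
    (x y : Cfg n) :
    ((phaseLayer G f g)ᴴ * A * phaseLayer G f g) x y
      = Complex.exp (Complex.I * g * (costEnergy G f x - costEnergy G f y : ℝ)) * A x y := by
  rw [phaseLayer, diagonal_conjTranspose, mul_diagonal, diagonal_mul, Pi.star_apply,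
    Complex.star_def, ← Complex.exp_conj]
  simp only [map_neg, map_mul, Complex.conj_I, Complex.conj_ofReal]
  rw [mul_comm _ (A x y), mul_assoc, ← Complex.exp_add, mul_comm]
  push_cast
  ring_nf

lemma phaseLayer_mem_unitaryGroup (G : KHypergraph n k) (f : (Fin k → Bool) → ℝ) (g : ℝ) :
    phaseLayer G f g ∈ unitaryGroup (Cfg n) ℂ := by
  rw [mem_unitaryGroup_iff', star_eq_conjTranspose]
  ext x y
  rw [← (phaseLayer G f g)ᴴ.mul_one, conj_phaseLayer_apply]
  by_cases hxy : x = y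
  · simp [hxy]
  · simp [one_apply_ne hxy]

lemma SupportedOn.conj_phaseLayer {S : Finset (Fin n)} {A : QOp n} (hA : SupportedOn S A)
    (G : KHypergraph n k) (f : (Fin k → Bool) → ℝ) (g : ℝ) :
    SupportedOn (ball G S 1) ((phaseLayer G f g)ᴴ * A * phaseLayer G f g) where
  eq_of_ne_zero {x y} hxy v hv := by
    rw [conj_phaseLayer_apply] at hxy
    exact hA.eq_of_ne_zero (right_ne_zero_of_mul hxy) v fun hS => hv (subset_ball G S 1 hS)
  add_add {d} hd x y := by
    rw [conj_phaseLayer_apply, conj_phaseLayer_apply,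
      hA.add_add fun v hv => hd v (subset_ball G S 1 hv)]
    by_cases hA0 : A x y = 0
    · rw [hA0, mul_zero, mul_zero]
    have hxy := hA.eq_of_ne_zero hA0
    have hxyd : ∀ v ∉ S, (x + d) v = (y + d) v := fun v hv => by
      simp only [Pi.add_apply, hxy v hv]
    have hshift : ∀ z : Cfg n, costEnergy (G.filter (Meets S)) f (z + d)
        = costEnergy (G.filter (Meets S)) f z := fun z =>
      costEnergy_congr fun e he i =>
        have ⟨heG, heS⟩ := Multiset.mem_filter.mp he
        cfg_add_apply_of_eq_false (hd _ (mem_ball_one_of_meets heG heS i))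
    rw [costEnergy_sub_eq_filter_meets hxyd, costEnergy_sub_eq_filter_meets hxy, hshift, hshift]

lemma conj_phaseLayer_congr {G G' : KHypergraph n k} {f : (Fin k → Bool) → ℝ}
    {S : Finset (Fin n)} {A : QOp n} (hA : SupportedOn S A)
    (hG : G.filter (Meets S) = G'.filter (Meets S)) (g : ℝ) :
    (phaseLayer G f g)ᴴ * A * phaseLayer G f g = (phaseLayer G' f g)ᴴ * A * phaseLayer G' f g := by
  ext x y
  rw [conj_phaseLayer_apply, conj_phaseLayer_apply]
  by_cases hA0 : A x y = 0
  · rw [hA0, mul_zero, mul_zero]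
  rw [costEnergy_sub_eq_filter_meets (G := G) (hA.eq_of_ne_zero hA0),
    costEnergy_sub_eq_filter_meets (G := G') (hA.eq_of_ne_zero hA0), hG]

end Phase

section Circuit

lemma qaoaU_mem_unitaryGroup (G : KHypergraph n k) (f : (Fin k → Bool) → ℝ) (p : ℕ)
    (β γ : Fin p → ℝ) : qaoaU G f p β γ ∈ unitaryGroup (Cfg n) ℂ := by
  refine Submonoid.list_prod_mem _ fun U hU => ?_
  obtain ⟨j, -, rfl⟩ := List.mem_map.mp hU
  exact mul_mem (mixerLayer_mem_unitaryGroup _) (phaseLayer_mem_unitaryGroup G f _)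

lemma conj_qaoaU_succ (G : KHypergraph n k) (f : (Fin k → Bool) → ℝ) {p : ℕ}
    (β γ : Fin (p + 1) → ℝ) (A : QOp n) :
    (qaoaU G f (p + 1) β γ)ᴴ * A * qaoaU G f (p + 1) β γ
      = (qaoaU G f p (Fin.tail β) (Fin.tail γ))ᴴ
          * ((phaseLayer G f (γ 0))ᴴ * ((mixerLayer n (β 0))ᴴ * A * mixerLayer n (β 0))
            * phaseLayer G f (γ 0))
          * qaoaU G f p (Fin.tail β) (Fin.tail γ) := by
  simp only [qaoaU, List.finRange_succ, List.map_cons, List.map_map, List.prod_cons,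
    conjTranspose_mul, mul_assoc]
  rfl

lemma SupportedOn.conj_qaoaU {S : Finset (Fin n)} {A : QOp n} (hA : SupportedOn S A)
    (G : KHypergraph n k) (f : (Fin k → Bool) → ℝ) (p : ℕ) (β γ : Fin p → ℝ) :
    SupportedOn (ball G S p) ((qaoaU G f p β γ)ᴴ * A * qaoaU G f p β γ) := by
  induction p generalizing S A with
  | zero => simpa [qaoaU, ball] using hA
  | succ p ih =>
    have := ih ((hA.conj_mixerLayer (β 0)).conj_phaseLayer G f (γ 0)) (Fin.tail β) (Fin.tail γ)
    rwa [ball_ball, add_comm, ← conj_qaoaU_succ] at this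

lemma conj_qaoaU_congr {G G' : KHypergraph n k} {f : (Fin k → Bool) → ℝ}
    {S : Finset (Fin n)} {A : QOp n} (hA : SupportedOn S A) {p : ℕ} (β γ : Fin p → ℝ)
    (hG : G.filter (fun e => ∀ i, e i ∈ ball G S p)
      = G'.filter (fun e => ∀ i, e i ∈ ball G' S p)) :
    (qaoaU G f p β γ)ᴴ * A * qaoaU G f p β γ = (qaoaU G' f p β γ)ᴴ * A * qaoaU G' f p β γ := by
  induction p generalizing S A with
  | zero => rfl
  | succ p ih =>
    have hmeets := filter_meets_eq_of_filter_ball_eq hG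
    have hball : ball G S 1 = ball G' S 1 := by
      rw [← ball_filter_meets_one, hmeets, ball_filter_meets_one]
    rw [conj_qaoaU_succ, conj_qaoaU_succ, conj_phaseLayer_congr (hA.conj_mixerLayer _) hmeets]
    refine ih ((hA.conj_mixerLayer _).conj_phaseLayer G' f _) _ _ ?_
    rwa [ball_ball, ← hball, ball_ball, add_comm]

end Circuit

end Qaoa

/-- Depth-`p` QAOA is a generic `2p`-local algorithm: the joint distribution of
the measured output bits on a vertex set `L` depends only on the
`p`-neighborhood of `L`, and the output bit at `v` is independent of the joint
distribution of the output bits at all vertices farther than `2p` from `v`. -/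
theorem qaoa_is_generic_2p_local {n k : ℕ} (f : (Fin k → Bool) → ℝ) (p : ℕ)
    (β γ : Fin p → ℝ) :
    (∀ (G G' : KHypergraph n k) (L : Finset (Fin n)),
      ball G L p = ball G' L p →
      Multiset.filter (fun e => ∀ i, e i ∈ ball G L p) G
        = Multiset.filter (fun e => ∀ i, e i ∈ ball G' L p) G' →
      ∀ τ : (v : Fin n) → v ∈ L → Bool,
        qaoaProbOf G f p β γ {x | ∀ v (hv : v ∈ L), x v = τ v hv}
          = qaoaProbOf G' f p β γ {x | ∀ v (hv : v ∈ L), x v = τ v hv}) ∧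
    (∀ (G : KHypergraph n k) (v : Fin n) (a : Bool)
        (b : (u : Fin n) → u ∉ ball G {v} (2 * p) → Bool),
      qaoaProbOf G f p β γ
          ({x | x v = a} ∩ {x | ∀ u (hu : u ∉ ball G {v} (2 * p)), x u = b u hu})
        = qaoaProbOf G f p β γ {x | x v = a} *
            qaoaProbOf G f p β γ
              {x | ∀ u (hu : u ∉ ball G {v} (2 * p)), x u = b u hu}) := by
  open Qaoa in
  refine ⟨fun G G' L _ hG τ => ?_, fun G v a b => ?_⟩
  · have hL : SupportedOn L (projE {x : Cfg n | ∀ v (hv : v ∈ L), x v = τ v hv}) :=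
      supportedOn_projE fun x y hxy hx v hv => (hxy v hv).symm.trans (hx v hv)
    exact_mod_cast (qaoaProbOf_eq_expVal G f p β γ _).trans
      ((congrArg expVal (conj_qaoaU_congr hL β γ hG)).trans
        (qaoaProbOf_eq_expVal G' f p β γ _).symm)
  · have hsite : SupportedOn {v} (projE {x : Cfg n | x v = a}) :=
      supportedOn_projE fun x y hxy hx => (hxy v (mem_singleton_self v)).symm.trans hx
    have hfar : SupportedOn (ball G {v} (2 * p))ᶜ
        (projE {x : Cfg n | ∀ u (hu : u ∉ ball G {v} (2 * p)), x u = b u hu}) :=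
      supportedOn_projE fun x y hxy hx u hu => (hxy u (mem_compl.mpr hu)).symm.trans (hx u hu)
    have hdisj := disjoint_ball_ball_compl_ball (G := G) {v} p p
    rw [← two_mul] at hdisj
    have key := expVal_mul_of_disjoint (hsite.conj_qaoaU G f p β γ) (hfar.conj_qaoaU G f p β γ)
      hdisj
    rw [← conjTranspose_mul_mul_distrib (qaoaU_mem_unitaryGroup G f p β γ), projE_mul_projE,
      ← qaoaProbOf_eq_expVal, ← qaoaProbOf_eq_expVal, ← qaoaProbOf_eq_expVal] at key
    exact_mod_cast key
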